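/- arXiv:2106.12055 — 4 statements merged into one kernel-verified Lean document; each statement's English description precedes it below -/
import Mathlib

section
/- (Characterization of anchored sets.) Given H ⊆ J, a vector x is a schedule of G(p) such that H is x-anchored for Δ if and only if x is a schedule of the augmented graph G̃_H, obtained from G(p) by adding, for every i ∈ H ∪ {s} and j ∈ H with i ≺ j, an arc (i,j) of length L^Δ(i,j). Equivalently, H is x-anchored if and only if x is a schedule of G(p) satisfying x_j − x_i ≥ L^Δ(i,j) for all i ∈ H ∪ {s}, j ∈ H with i ≺ j. -/
/-! Necessity: for the worst-case `δ`, a schedule `y` of `G(p + δ)` pinned to `x` on `H` (and with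
`y_s = x_s = 0`) must fit the longest `i`–`j` path between `x_i` and `x_j`.
Sufficiency: for a given `δ`, start every vertex `v` at the time forced by the anchors,
`y_v = max (x_h + length of an h–v path)` over `h ∈ H ∪ {s}`. This is a schedule of `G(p + δ)`,
and the inequalities `x_j - x_i ≥ L^Δ(i,j)`, together with the fact that nothing precedes `s`,
say precisely that at an anchor the maximum is attained by the trivial path, so `y = x` on `H`. -/

/-- Length of a path (given as a list of vertices) when each arc `(i,j)` has
length `q i` (the duration of its source vertex). -/
def PathLen {V : Type*} (q : V → ℝ) (l : List V) : ℝ := (l.dropLast.map q).sum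

/-- `l` is a path from `i` to `j` in the digraph with arc relation `A`. -/
def IsPath {V : Type*} (A : V → V → Prop) (i j : V) (l : List V) : Prop :=
  l ≠ [] ∧ l.Chain' A ∧ l.head? = some i ∧ l.getLast? = some j

/-- Length of a path for arc-indexed weights `w`. -/
def LenW {V : Type*} (w : V → V → ℝ) : List V → ℝ
  | a :: b :: l => w a b + LenW w (b :: l)
  | _ => 0

/-- `x` is a schedule of the precedence graph `(V, A)` with durations `q` and source `s`. -/
def Sched {V : Type*} (A : V → V → Prop) (s : V) (q x : V → ℝ) : Prop :=
  x s = 0 ∧ (∀ v, 0 ≤ x v) ∧ ∀ i j, A i j → q i ≤ x j - x i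

/-- `H` is `x`-anchored for the uncertainty set `Δ`. -/
def XAnchored {V : Type*} (A : V → V → Prop) (s : V) (p : V → ℝ)
    (Δ : Set (V → ℝ)) (x : V → ℝ) (H : Set V) : Prop :=
  ∀ δ ∈ Δ, ∃ y, Sched A s (fun v => p v + δ v) y ∧ ∀ i ∈ H, y i = x i

/-- `L` is the longest `i`–`j` path length under durations `q`. -/
def IsLongest {V : Type*} (A : V → V → Prop) (q : V → ℝ) (i j : V) (L : ℝ) : Prop :=
  IsGreatest {r | ∃ l, IsPath A i j l ∧ PathLen q l = r} L

/-- `L` is the worst-case longest `i`–`j` path length over the uncertainty set `Δ`. -/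
def IsWorst {V : Type*} (A : V → V → Prop) (p : V → ℝ) (Δ : Set (V → ℝ))
    (i j : V) (L : ℝ) : Prop :=
  IsGreatest {r | ∃ δ ∈ Δ, ∃ l, IsPath A i j l ∧ PathLen (fun v => p v + δ v) l = r} L

open Relation

section Paths

variable {V : Type*} {A : V → V → Prop}

lemma isPath_singleton_iff {i j a : V} : IsPath A i j [a] ↔ i = a ∧ j = a := by
  constructor
  · rintro ⟨-, -, hi, hj⟩
    exact ⟨(Option.some_inj.1 hi).symm, (Option.some_inj.1 hj).symm⟩
  · rintro ⟨rfl, rfl⟩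
    exact ⟨List.cons_ne_nil _ _, List.isChain_singleton _, rfl, rfl⟩

lemma isPath_cons_cons_iff {i j a b : V} {l : List V} :
    IsPath A i j (a :: b :: l) ↔ i = a ∧ A a b ∧ IsPath A b j (b :: l) := by
  rw [IsPath, IsPath, List.getLast?_cons_cons]
  constructor
  · rintro ⟨-, hc, hi, hj⟩
    obtain ⟨hab, hc⟩ := List.isChain_cons_cons.1 hc
    exact ⟨(Option.some_inj.1 hi).symm, hab, List.cons_ne_nil _ _, hc, rfl, hj⟩
  · rintro ⟨rfl, hab, -, hc, -, hj⟩
    exact ⟨List.cons_ne_nil _ _, List.isChain_cons_cons.2 ⟨hab, hc⟩, rfl, hj⟩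

lemma isPath_singleton (v : V) : IsPath A v v [v] :=
  isPath_singleton_iff.2 ⟨rfl, rfl⟩

lemma pathLen_singleton (q : V → ℝ) (v : V) : PathLen q [v] = 0 := by
  simp [PathLen]

lemma pathLen_cons_cons (q : V → ℝ) (a b : V) (l : List V) :
    PathLen q (a :: b :: l) = q a + PathLen q (b :: l) := by
  simp [PathLen]

lemma pathLen_nonneg {q : V → ℝ} (hq : ∀ v, 0 ≤ q v) (l : List V) : 0 ≤ PathLen q l :=
  List.sum_nonneg fun _ hr => by
    obtain ⟨a, -, rfl⟩ := List.mem_map.1 hr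
    exact hq a

lemma IsPath.concat {i j k : V} {l : List V} (hl : IsPath A i j l) (hjk : A j k) :
    IsPath A i k (l ++ [k]) := by
  obtain ⟨hne, hc, hh, hlast⟩ := hl
  refine ⟨by simp, List.isChain_append.2 ?_, by simp [List.head?_append, hh], List.getLast?_concat⟩
  refine ⟨hc, List.isChain_singleton k, fun a ha b hb => ?_⟩
  rw [Option.mem_def, hlast, Option.some_inj] at ha
  simp only [List.head?_cons, Option.mem_def, Option.some_inj] at hb
  exact ha ▸ hb ▸ hjk

lemma IsPath.pathLen_concat (q : V → ℝ) {i j : V} {l : List V} (hl : IsPath A i j l) (k : V) :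
    PathLen q (l ++ [k]) = PathLen q l + q j := by
  obtain ⟨l', rfl⟩ := List.getLast?_eq_some_iff.1 hl.2.2.2
  simp [PathLen]

lemma IsPath.eq_singleton_or_transGen : ∀ {l : List V} {i j : V}, IsPath A i j l →
    (i = j ∧ l = [i]) ∨ TransGen A i j
  | [], _, _, h => absurd rfl h.1
  | [_], _, _, h => by
      obtain ⟨rfl, rfl⟩ := isPath_singleton_iff.1 h
      exact Or.inl ⟨rfl, rfl⟩
  | _ :: _ :: _, _, _, h => by
      obtain ⟨rfl, hab, htail⟩ := isPath_cons_cons_iff.1 h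
      rcases htail.eq_singleton_or_transGen with ⟨rfl, -⟩ | hbj
      · exact Or.inr (.single hab)
      · exact Or.inr (.head hab hbj)

lemma exists_isPath_of_reflTransGen {i j : V} (h : ReflTransGen A i j) : ∃ l, IsPath A i j l := by
  induction h with
  | refl => exact ⟨[i], isPath_singleton i⟩
  | tail _ hbc ih =>
      obtain ⟨l, hl⟩ := ih
      exact ⟨l ++ [_], hl.concat hbc⟩

lemma not_transGen_to_source {s : V} (hacyc : ∀ v, ¬ TransGen A v v)
    (hsrc : ∀ v, v ≠ s → TransGen A s v) (v : V) : ¬ TransGen A v s := by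
  intro hvs
  by_cases hv : v = s
  · exact hacyc s (hv ▸ hvs)
  · exact hacyc s ((hsrc v hv).trans hvs)

lemma Sched.pathLen_le {s : V} {q y : V → ℝ} (hy : Sched A s q y) :
    ∀ {l : List V} {i j : V}, IsPath A i j l → PathLen q l ≤ y j - y i
  | [], _, _, h => absurd rfl h.1
  | [_], _, _, h => by
      obtain ⟨rfl, rfl⟩ := isPath_singleton_iff.1 h
      simp [pathLen_singleton]
  | _ :: b :: _, _, _, h => by
      obtain ⟨rfl, hab, htail⟩ := isPath_cons_cons_iff.1 h
      have harc := hy.2.2 _ b hab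
      have htail_le := hy.pathLen_le htail
      rw [pathLen_cons_cons]
      linarith

end Paths

section EarliestStart

variable {V : Type*} (A : V → V → Prop) (q : V → ℝ) (R : Set V) (x : V → ℝ)

def anchoredStarts (v : V) : Set ℝ :=
  {r | ∃ h ∈ R, ∃ l, IsPath A h v l ∧ x h + PathLen q l = r}

noncomputable def earliestStart (v : V) : ℝ :=
  sSup (anchoredStarts A q R x v)

variable {A q R x}

lemma mem_anchoredStarts {h v : V} {l : List V} (hh : h ∈ R) (hl : IsPath A h v l) :
    x h + PathLen q l ∈ anchoredStarts A q R x v :=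
  ⟨h, hh, l, hl, rfl⟩

lemma bddAbove_anchoredStarts [Finite V]
    (hbdd : ∀ h v, BddAbove (PathLen q '' {l | IsPath A h v l})) (v : V) :
    BddAbove (anchoredStarts A q R x v) := by
  choose B hB using fun h => hbdd h v
  obtain ⟨M, hM⟩ := (Set.finite_range fun h => x h + B h).bddAbove
  refine ⟨M, ?_⟩
  rintro _ ⟨h, -, l, hl, rfl⟩
  linarith [hB h ⟨l, hl, rfl⟩, hM ⟨h, rfl⟩]

lemma le_earliestStart {h v : V} {l : List V} (hbdd : BddAbove (anchoredStarts A q R x v))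
    (hh : h ∈ R) (hl : IsPath A h v l) : x h + PathLen q l ≤ earliestStart A q R x v :=
  le_csSup hbdd (mem_anchoredStarts hh hl)

lemma earliestStart_eq_of_mem {v : V} (hv : v ∈ R) (hbdd : BddAbove (anchoredStarts A q R x v))
    (hcons : ∀ h ∈ R, ∀ l, IsPath A h v l → x h + PathLen q l ≤ x v) :
    earliestStart A q R x v = x v := by
  have htrivial : x v + PathLen q [v] = x v := by rw [pathLen_singleton, add_zero]
  refine le_antisymm (csSup_le ⟨_, mem_anchoredStarts hv (isPath_singleton v)⟩ ?_) ?_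
  · rintro _ ⟨h, hh, l, hl, rfl⟩
    exact hcons h hh l hl
  · exact htrivial ▸ le_earliestStart hbdd hv (isPath_singleton v)

lemma earliestStart_add_le {i j : V} (hne : (anchoredStarts A q R x i).Nonempty)
    (hbdd : BddAbove (anchoredStarts A q R x j)) (hij : A i j) :
    earliestStart A q R x i + q i ≤ earliestStart A q R x j := by
  refine le_sub_iff_add_le.1 (csSup_le hne ?_)
  rintro _ ⟨h, hh, l, hl, rfl⟩
  have := le_earliestStart hbdd hh (hl.concat hij)
  rw [hl.pathLen_concat] at this
  linarith

theorem exists_sched_eq_of_consistent [Finite V] {s : V} (hq : ∀ v, 0 ≤ q v) (hs : s ∈ R)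
    (hxs : x s = 0) (hreach : ∀ v, ReflTransGen A s v)
    (hbdd : ∀ h v, BddAbove (PathLen q '' {l | IsPath A h v l}))
    (hcons : ∀ h ∈ R, ∀ v ∈ R, ∀ l, IsPath A h v l → x h + PathLen q l ≤ x v) :
    ∃ y, Sched A s q y ∧ ∀ v ∈ R, y v = x v := by
  have hbdd' := bddAbove_anchoredStarts (R := R) (x := x) hbdd
  have hfromSource v : ∃ l, IsPath A s v l := exists_isPath_of_reflTransGen (hreach v)
  refine ⟨earliestStart A q R x, ⟨?_, fun v => ?_, fun i j hij => ?_⟩,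
    fun v hv => earliestStart_eq_of_mem hv (hbdd' v) (hcons · · v hv)⟩
  · rw [earliestStart_eq_of_mem hs (hbdd' s) (hcons · · s hs), hxs]
  · obtain ⟨l, hl⟩ := hfromSource v
    linarith [le_earliestStart (hbdd' v) hs hl, pathLen_nonneg hq l]
  · obtain ⟨l, hl⟩ := hfromSource i
    linarith [earliestStart_add_le ⟨_, mem_anchoredStarts hs hl⟩ (hbdd' j) hij]

end EarliestStart

section Anchored

variable {V : Type*} {A : V → V → Prop} {s : V} {p x : V → ℝ} {Δ : Set (V → ℝ)}

lemma IsWorst.pathLen_le {i j : V} {L : ℝ} (hL : IsWorst A p Δ i j L) {δ : V → ℝ} (hδ : δ ∈ Δ)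
    {l : List V} (hl : IsPath A i j l) : PathLen (fun v => p v + δ v) l ≤ L :=
  hL.2 ⟨δ, hδ, l, hl, rfl⟩

lemma bddAbove_pathLen_of_isWorst {LΔ : V → V → ℝ}
    (hLΔ : ∀ i j, TransGen A i j → IsWorst A p Δ i j (LΔ i j)) {δ : V → ℝ} (hδ : δ ∈ Δ)
    (i j : V) : BddAbove (PathLen (fun v => p v + δ v) '' {l | IsPath A i j l}) := by
  by_cases hij : TransGen A i j
  · exact ⟨LΔ i j, by rintro _ ⟨l, hl, rfl⟩; exact (hLΔ i j hij).pathLen_le hδ hl⟩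
  · refine ⟨0, ?_⟩
    rintro _ ⟨l, hl, rfl⟩
    rcases hl.eq_singleton_or_transGen with ⟨-, rfl⟩ | hij'
    · exact (pathLen_singleton _ _).le
    · exact absurd hij' hij

lemma XAnchored.isWorst_le {H : Set V} {i j : V} {L : ℝ} (hanch : XAnchored A s p Δ x H)
    (hx : Sched A s p x) (hi : i ∈ H ∨ i = s) (hj : j ∈ H) (hL : IsWorst A p Δ i j L) :
    L ≤ x j - x i := by
  obtain ⟨δ, hδ, l, hl, rfl⟩ := hL.1
  obtain ⟨y, hy, hyx⟩ := hanch δ hδ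
  have hyi : y i = x i := by
    rcases hi with hi | rfl
    exacts [hyx i hi, hy.1.trans hx.1.symm]
  rw [← hyx j hj, ← hyi]
  exact hy.pathLen_le hl

end Anchored

theorem anchored_characterization_general
    {V : Type*} [Fintype V] (A : V → V → Prop) (s : V)
    (p : V → ℝ) (hp : ∀ v, 0 ≤ p v)
    (hacyc : ∀ v, ¬ Relation.TransGen A v v)
    (hsrc : ∀ v, v ≠ s → Relation.TransGen A s v)
    (Δ : Set (V → ℝ)) (hΔnonneg : ∀ δ ∈ Δ, ∀ v, 0 ≤ δ v)
    (LΔ : V → V → ℝ)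
    (hLΔ : ∀ i j, Relation.TransGen A i j → IsWorst A p Δ i j (LΔ i j))
    (H : Set V) (x : V → ℝ) :
    (Sched A s p x ∧ XAnchored A s p Δ x H) ↔
      (Sched A s p x ∧ ∀ i j, (i ∈ H ∨ i = s) → j ∈ H →
        Relation.TransGen A i j → LΔ i j ≤ x j - x i) := by
  refine ⟨fun ⟨hx, hanch⟩ => ⟨hx, fun i j hi hj hij => hanch.isWorst_le hx hi hj (hLΔ i j hij)⟩, ?_⟩
  rintro ⟨hx, hineq⟩
  refine ⟨hx, fun δ hδ => ?_⟩
  have hreach v : ReflTransGen A s v := by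
    by_cases hv : v = s
    exacts [hv ▸ .refl, (hsrc v hv).to_reflTransGen]
  have hcons : ∀ h ∈ {v | v ∈ H ∨ v = s}, ∀ v ∈ {v | v ∈ H ∨ v = s}, ∀ l, IsPath A h v l →
      x h + PathLen (fun v => p v + δ v) l ≤ x v := by
    intro h hh v hv l hl
    rcases hl.eq_singleton_or_transGen with ⟨rfl, rfl⟩ | hhv
    · rw [pathLen_singleton, add_zero]
    rcases hv with hv | rfl
    · linarith [(hLΔ h v hhv).pathLen_le hδ hl, hineq h v hh hv hhv]
    · exact absurd hhv (not_transGen_to_source hacyc hsrc h)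
  obtain ⟨y, hy, hyx⟩ := exists_sched_eq_of_consistent
    (fun v => add_nonneg (hp v) (hΔnonneg δ hδ v)) (Or.inr rfl) hx.1 hreach
    (bddAbove_pathLen_of_isWorst hLΔ hδ) hcons
  exact ⟨y, hy, fun v hv => hyx v (Or.inl hv)⟩

/-- characterization of anchored sets: `x` is a schedule of `G(p)` such
that `H` is `x`-anchored iff `x` is a schedule of `G(p)` satisfying
`x_j - x_i ≥ L^Δ(i,j)` for all `i ∈ H ∪ {s}`, `j ∈ H` with `i ≺ j`. -/
theorem anchored_characterization
    {V : Type*} [Fintype V] (A : V → V → Prop) (s t : V)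
    (p : V → ℝ) (hp : ∀ v, 0 ≤ p v) (hps : p s = 0)
    (hacyc : ∀ v, ¬ Relation.TransGen A v v)
    (hsrc : ∀ v, v ≠ s → Relation.TransGen A s v)
    (hsink : ∀ v, v ≠ t → Relation.TransGen A v t)
    (Δ : Set (V → ℝ)) (hΔne : Δ.Nonempty) (hΔnonneg : ∀ δ ∈ Δ, ∀ v, 0 ≤ δ v)
    (hΔst : ∀ δ ∈ Δ, δ s = 0 ∧ δ t = 0)
    (LΔ : V → V → ℝ)
    (hLΔ : ∀ i j, Relation.TransGen A i j → IsWorst A p Δ i j (LΔ i j))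
    (H : Set V) (hHs : s ∉ H) (hHt : t ∉ H) (x : V → ℝ) :
    (Sched A s p x ∧ XAnchored A s p Δ x H) ↔
      (Sched A s p x ∧ ∀ i j, (i ∈ H ∨ i = s) → j ∈ H →
        Relation.TransGen A i j → LΔ i j ≤ x j - x i) :=
  anchored_characterization_general A s p hp hacyc hsrc Δ hΔnonneg LΔ hLΔ H x
end

section
/- (Dominance theorem.) Fix H ⊆ J, deadline M, and uncertainty set Δ. Define X_H = { x schedule of G(p) with x_t ≤ M : x_j − x_i ≥ L^Δ(i,j) for all i ∈ H∪{s}, j ∈ H, i ≺ j } and Z_H = { z schedule of G(p) with z_t ≤ M : z_j − z_i ≥ L^Δ(i,j) for all i ∈ J∪{s}, j ∈ H, i ≺ j }. Then Z_H ⊆ X_H, and if X_H is nonempty then Z_H is nonempty. -/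
/-
Along an arc `i → i'`, prepending `i` to a worst-case `i'`–`k` path shows
`p i + L^Δ(i', k) ≤ L^Δ(i, k)`; with `p ≥ 0` this makes `L^Δ(·, k)` antitone along paths.
Given `x ∈ X_H`, move every job `v` back to
`z v = min (x v) (min {x j - L^Δ(v, j) | j ∈ H, v ≺ j})`.
Jobs of `H` stay put because `x` already respects the separations inside `H ∪ {s}`;
`z ≥ 0` because `L^Δ(v, j) ≤ L^Δ(s, j) ≤ x j`; and the arc inequality for `z` follows from
the one for `x` and the superadditivity above. By construction `z` meets all separations
from `J ∪ {s}` into `H`. The inclusion `Z_H ⊆ X_H` only needs `s ≠ t`.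
-/

open Relation

lemma IsPath.cons {V : Type*} {A : V → V → Prop} {u v j : V} {l : List V}
    (hl : IsPath A v j l) (h : A u v) : IsPath A u j (u :: l) := by
  obtain ⟨hne, hch, hh, hg⟩ := hl
  cases l with
  | nil => exact absurd rfl hne
  | cons a l =>
    obtain rfl : a = v := Option.some.inj hh
    exact ⟨List.cons_ne_nil _ _, List.isChain_cons_cons.mpr ⟨h, hch⟩, rfl, by simpa using hg⟩

lemma pathLen_cons {V : Type*} (q : V → ℝ) (u : V) {l : List V} (hl : l ≠ []) :
    PathLen q (u :: l) = q u + PathLen q l := by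
  simp [PathLen, List.dropLast_cons_of_ne_nil hl]

lemma IsWorst.add_le_of_arc {V : Type*} {A : V → V → Prop} {p : V → ℝ} {Δ : Set (V → ℝ)}
    {i i' k : V} {a b : ℝ} (ha : IsWorst A p Δ i' k a) (hb : IsWorst A p Δ i k b)
    (h : A i i') (hΔi : ∀ δ ∈ Δ, 0 ≤ δ i) : p i + a ≤ b := by
  obtain ⟨⟨δ, hδ, l, hl, rfl⟩, -⟩ := ha
  have hlen := pathLen_cons (fun v => p v + δ v) i hl.1
  have := hb.2 ⟨δ, hδ, i :: l, hl.cons h, rfl⟩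
  linarith [hΔi δ hδ]

lemma le_of_transGen_of_superadditive {V : Type*} {A : V → V → Prop} {q : V → ℝ}
    {L : V → V → ℝ} (hq : ∀ v, 0 ≤ q v)
    (hL : ∀ i i' k, A i i' → TransGen A i' k → q i + L i' k ≤ L i k)
    {u v j : V} (huv : TransGen A u v) (hvj : TransGen A v j) : L v j ≤ L u j := by
  induction huv using TransGen.head_induction_on with
  | @single a h => linarith [hL a v j h hvj, hq a]
  | @head a w h hwv ih => linarith [hL a w j h (hwv.trans hvj), hq a]

lemma source_ne_sink {V : Type*} {A : V → V → Prop} {s t j : V}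
    (hacyc : ∀ v, ¬ TransGen A v v) (hsrc : ∀ v, v ≠ s → TransGen A s v)
    (hsink : ∀ v, v ≠ t → TransGen A v t) (hjs : j ≠ s) (hjt : j ≠ t) : s ≠ t := by
  rintro rfl
  exact hacyc s ((hsrc j hjs).trans (hsink j hjt))

section LatestStart

variable {V : Type*} [Fintype V] (A : V → V → Prop) (H : Set V) (L : V → V → ℝ) (x : V → ℝ)

open Classical in
noncomputable def latestStart (v : V) : ℝ :=
  (insert (x v) ((Finset.univ.filter fun j => j ∈ H ∧ TransGen A v j).image
    fun j => x j - L v j)).min' (Finset.insert_nonempty _ _)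

variable {A H L x}

lemma le_latestStart_iff {v : V} {c : ℝ} :
    c ≤ latestStart A H L x v ↔ c ≤ x v ∧ ∀ j ∈ H, TransGen A v j → c ≤ x j - L v j := by
  classical
  simp only [latestStart, Finset.le_min'_iff, Finset.forall_mem_insert, Finset.forall_mem_image,
    Finset.mem_filter, Finset.mem_univ, true_and, and_imp]

lemma latestStart_le (v : V) : latestStart A H L x v ≤ x v :=
  (le_latestStart_iff.mp le_rfl).1

lemma latestStart_le_sub {v j : V} (hj : j ∈ H) (hvj : TransGen A v j) :
    latestStart A H L x v ≤ x j - L v j :=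
  (le_latestStart_iff.mp le_rfl).2 j hj hvj

lemma latestStart_eq {j : V} (hx : ∀ k ∈ H, TransGen A j k → L j k ≤ x k - x j) :
    latestStart A H L x j = x j :=
  (latestStart_le j).antisymm <| le_latestStart_iff.mpr
    ⟨le_rfl, fun k hk hjk => by linarith [hx k hk hjk]⟩

lemma sched_latestStart {s : V} {p : V → ℝ} (hx : Sched A s p x)
    (hL : ∀ i i' k, A i i' → TransGen A i' k → p i + L i' k ≤ L i k)
    (hLx : ∀ v j, j ∈ H → TransGen A v j → L v j ≤ x j) :
    Sched A s p (latestStart A H L x) := by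
  obtain ⟨hxs, hx0, hxA⟩ := hx
  have hnonneg : ∀ v, 0 ≤ latestStart A H L x v := fun v =>
    le_latestStart_iff.mpr ⟨hx0 v, fun j hj hvj => sub_nonneg.mpr (hLx v j hj hvj)⟩
  refine ⟨((latestStart_le s).trans hxs.le).antisymm (hnonneg s), hnonneg, fun i i' h => ?_⟩
  suffices latestStart A H L x i + p i ≤ latestStart A H L x i' by linarith
  have hi := latestStart_le (A := A) (H := H) (L := L) (x := x) i
  refine le_latestStart_iff.mpr ⟨by linarith [hxA i i' h], fun k hk hi'k => ?_⟩
  linarith [latestStart_le_sub (L := L) (x := x) hk (TransGen.head h hi'k), hL i i' k h hi'k]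

end LatestStart

theorem dominance_theorem_general
    {V : Type*} [Fintype V] (A : V → V → Prop) (s t : V)
    (p : V → ℝ) (hp : ∀ v, 0 ≤ p v)
    (hacyc : ∀ v, ¬ Relation.TransGen A v v)
    (hsrc : ∀ v, v ≠ s → Relation.TransGen A s v)
    (hsink : ∀ v, v ≠ t → Relation.TransGen A v t)
    (Δ : Set (V → ℝ)) (hΔnonneg : ∀ δ ∈ Δ, ∀ v, 0 ≤ δ v)
    (LΔ : V → V → ℝ)
    (hLΔ : ∀ i j, Relation.TransGen A i j → IsWorst A p Δ i j (LΔ i j))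
    (H : Set V) (hHs : s ∉ H) (hHt : t ∉ H) (M : ℝ) :
    ({z : V → ℝ | Sched A s p z ∧ z t ≤ M ∧ ∀ i j, i ≠ t → j ∈ H →
        Relation.TransGen A i j → LΔ i j ≤ z j - z i} ⊆
      {x : V → ℝ | Sched A s p x ∧ x t ≤ M ∧ ∀ i j, (i ∈ H ∨ i = s) → j ∈ H →
        Relation.TransGen A i j → LΔ i j ≤ x j - x i}) ∧
    (({x : V → ℝ | Sched A s p x ∧ x t ≤ M ∧ ∀ i j, (i ∈ H ∨ i = s) → j ∈ H →
        Relation.TransGen A i j → LΔ i j ≤ x j - x i}).Nonempty →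
      ({z : V → ℝ | Sched A s p z ∧ z t ≤ M ∧ ∀ i j, i ≠ t → j ∈ H →
        Relation.TransGen A i j → LΔ i j ≤ z j - z i}).Nonempty) := by
  have hsuper : ∀ i i' k, A i i' → TransGen A i' k → p i + LΔ i' k ≤ LΔ i k :=
    fun i i' k h hk => (hLΔ i' k hk).add_le_of_arc (hLΔ i k (.head h hk)) h
      fun δ hδ => hΔnonneg δ hδ i
  refine ⟨fun z ⟨hz, hzM, hzL⟩ => ⟨hz, hzM, fun i j hi hj hij => hzL i j ?_ hj hij⟩, ?_⟩
  · rcases hi with hi | rfl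
    · exact ne_of_mem_of_not_mem hi hHt
    · exact source_ne_sink hacyc hsrc hsink (ne_of_mem_of_not_mem hj hHs)
        (ne_of_mem_of_not_mem hj hHt)
  rintro ⟨x, hx, hxM, hxL⟩
  have hLx : ∀ v j, j ∈ H → TransGen A v j → LΔ v j ≤ x j := by
    intro v j hj hvj
    obtain rfl | hv := eq_or_ne v s
    · simpa [hx.1] using hxL v j (.inr rfl) hj hvj
    · have := hxL s j (.inr rfl) hj ((hsrc v hv).trans hvj)
      linarith [le_of_transGen_of_superadditive hp hsuper (hsrc v hv) hvj, hx.1]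
  refine ⟨latestStart A H LΔ x, sched_latestStart hx hsuper hLx, (latestStart_le t).trans hxM,
    fun i j _ hj hij => ?_⟩
  rw [latestStart_eq fun k hk => hxL j k (.inl hj) hk]
  linarith [latestStart_le_sub (L := LΔ) (x := x) hj hij]

/-- dominance theorem: `Z_H ⊆ X_H`, and `X_H ≠ ∅` implies `Z_H ≠ ∅`,
where `X_H` imposes the worst-case longest-path separations only from `H ∪ {s}` to `H`,
while `Z_H` imposes them from all of `J ∪ {s}` to `H`. -/
theorem dominance_theorem
    {V : Type*} [Fintype V] (A : V → V → Prop) (s t : V)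
    (p : V → ℝ) (hp : ∀ v, 0 ≤ p v) (hps : p s = 0)
    (hacyc : ∀ v, ¬ Relation.TransGen A v v)
    (hsrc : ∀ v, v ≠ s → Relation.TransGen A s v)
    (hsink : ∀ v, v ≠ t → Relation.TransGen A v t)
    (Δ : Set (V → ℝ)) (hΔne : Δ.Nonempty) (hΔnonneg : ∀ δ ∈ Δ, ∀ v, 0 ≤ δ v)
    (hΔst : ∀ δ ∈ Δ, δ s = 0 ∧ δ t = 0)
    (LΔ : V → V → ℝ)
    (hLΔ : ∀ i j, Relation.TransGen A i j → IsWorst A p Δ i j (LΔ i j))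
    (H : Set V) (hHs : s ∉ H) (hHt : t ∉ H) (M : ℝ) :
    ({z : V → ℝ | Sched A s p z ∧ z t ≤ M ∧ ∀ i j, i ≠ t → j ∈ H →
        Relation.TransGen A i j → LΔ i j ≤ z j - z i} ⊆
      {x : V → ℝ | Sched A s p x ∧ x t ≤ M ∧ ∀ i j, (i ∈ H ∨ i = s) → j ∈ H →
        Relation.TransGen A i j → LΔ i j ≤ x j - x i}) ∧
    (({x : V → ℝ | Sched A s p x ∧ x t ≤ M ∧ ∀ i j, (i ∈ H ∨ i = s) → j ∈ H →
        Relation.TransGen A i j → LΔ i j ≤ x j - x i}).Nonempty →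
      ({z : V → ℝ | Sched A s p z ∧ z t ≤ M ∧ ∀ i j, i ≠ t → j ∈ H →
        Relation.TransGen A i j → LΔ i j ≤ z j - z i}).Nonempty) :=
  dominance_theorem_general A s t p hp hacyc hsrc hsink Δ hΔnonneg LΔ hLΔ H hHs hHt M
end

section
/- (Dom stronger than Lay.) Suppose for all i ≺ j the instance satisfies D_j := L_{G(p+d̂)}(s,j) − L⁰(s,j) ≥ L^Δ(i,j) − L⁰(i,j). Then for every h ∈ [0,1]^J and every i ≺ j, L^Δ(i,j) − D_j(1 − h_j) ≤ L⁰(i,j) + (L^Δ(i,j) − L⁰(i,j)) h_j, and consequently every chain inequality Σ_{(i,j)∈C, j≠t}(L⁰(i,j) + (L^Δ(i,j) − L⁰(i,j))h_j) + L⁰(j_C,t) ≤ M implies Σ_{(i,j)∈C, j≠t}(L^Δ(i,j) − D_j(1−h_j)) + L⁰(j_C,t) ≤ M; hence Proj_h(P_Dom) ⊆ Proj_h(P_Lay). -/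
lemma lenW_mono {V : Type*} {R : V → V → Prop} {w w' : V → V → ℝ}
    (hw : ∀ a b, R a b → w a b ≤ w' a b) :
    ∀ l : List V, l.IsChain R → LenW w l ≤ LenW w' l
  | [], _ => le_rfl
  | [_], _ => le_rfl
  | a :: b :: l, hc => by
    rw [List.isChain_cons_cons] at hc
    exact add_le_add (hw a b hc.1) (lenW_mono hw (b :: l) hc.2)

-- The right side minus the left side is `(D - (l - l₀)) * (1 - h)`.
lemma sub_mul_one_sub_le_add_sub_mul {l₀ l D h : ℝ} (hD : l - l₀ ≤ D) (h1 : h ≤ 1) :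
    l - D * (1 - h) ≤ l₀ + (l - l₀) * h := by
  have := mul_le_mul_of_nonneg_right hD (sub_nonneg.mpr h1)
  linarith

theorem dom_stronger_than_lay_general
    {V : Type*} [DecidableEq V] (A : V → V → Prop) (s t : V)
    (L0 LΔ : V → V → ℝ) (Ldhat : V → ℝ)
    (hcond : ∀ i j, Relation.TransGen A i j → LΔ i j - L0 i j ≤ Ldhat j - L0 s j)
    (M : ℝ) :
    (∀ h : V → ℝ, (∀ v, 0 ≤ h v ∧ h v ≤ 1) →
        ∀ i j, Relation.TransGen A i j →
          LΔ i j - (Ldhat j - L0 s j) * (1 - h j) ≤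
            L0 i j + (LΔ i j - L0 i j) * h j) ∧
    (∀ h : V → ℝ, (∀ v, 0 ≤ h v ∧ h v ≤ 1) →
      (∀ C : List V, IsPath (fun a b => Relation.TransGen A a b) s t C →
          LenW (fun i j => if j = t then L0 i t
            else L0 i j + (LΔ i j - L0 i j) * h j) C ≤ M) →
      (∀ C : List V, IsPath (fun a b => Relation.TransGen A a b) s t C →
          LenW (fun i j => if j = t then L0 i t
            else LΔ i j - (Ldhat j - L0 s j) * (1 - h j)) C ≤ M)) := by
  have hcoeff : ∀ h : V → ℝ, (∀ v, 0 ≤ h v ∧ h v ≤ 1) → ∀ i j, Relation.TransGen A i j →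
      LΔ i j - (Ldhat j - L0 s j) * (1 - h j) ≤ L0 i j + (LΔ i j - L0 i j) * h j :=
    fun h hh i j hij => sub_mul_one_sub_le_add_sub_mul (hcond i j hij) (hh j).2
  refine ⟨hcoeff, fun h hh hdom C hC => (lenW_mono ?_ C hC.2.1).trans (hdom C hC)⟩
  intro a b hab
  split_ifs
  · exact le_rfl
  · exact hcoeff h hh a b hab

/-- if `D_j := L_{G(p+d̂)}(s,j) − L⁰(s,j) ≥ L^Δ(i,j) − L⁰(i,j)` for all
`i ≺ j`, then the (Dom) arc coefficients dominate the (Lay) ones for every `h ∈ [0,1]^J`,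
and every chain inequality of (Dom) implies the corresponding chain inequality of (Lay);
hence `Proj_h(P_Dom) ⊆ Proj_h(P_Lay)`. -/
theorem dom_stronger_than_lay
    {V : Type*} [Fintype V] [DecidableEq V] (A : V → V → Prop) (s t : V)
    (p dhat : V → ℝ) (hp : ∀ v, 0 ≤ p v) (hdhat : ∀ v, 0 ≤ dhat v)
    (hps : p s = 0) (hds : dhat s = 0) (hdt : dhat t = 0)
    (Γ : ℕ) (hΓ : 1 ≤ Γ)
    (hacyc : ∀ v, ¬ Relation.TransGen A v v)
    (hsrc : ∀ v, v ≠ s → Relation.TransGen A s v)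
    (hsink : ∀ v, v ≠ t → Relation.TransGen A v t)
    (Δ : Set (V → ℝ))
    (hΔ : Δ = {δ | ∃ u : V → ℝ, (∀ v, 0 ≤ u v ∧ u v ≤ 1) ∧ (∑ v, u v) ≤ (Γ : ℝ) ∧
                  u s = 0 ∧ u t = 0 ∧ δ = fun v => dhat v * u v})
    (L0 LΔ : V → V → ℝ) (Ldhat : V → ℝ)
    (hL0 : ∀ i j, Relation.TransGen A i j → IsLongest A p i j (L0 i j))
    (hLΔ : ∀ i j, Relation.TransGen A i j → IsWorst A p Δ i j (LΔ i j))
    (hLdhat : ∀ j, IsLongest A (fun v => p v + dhat v) s j (Ldhat j))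
    (hcond : ∀ i j, Relation.TransGen A i j → LΔ i j - L0 i j ≤ Ldhat j - L0 s j)
    (M : ℝ) :
    (∀ h : V → ℝ, (∀ v, 0 ≤ h v ∧ h v ≤ 1) →
        ∀ i j, Relation.TransGen A i j →
          LΔ i j - (Ldhat j - L0 s j) * (1 - h j) ≤
            L0 i j + (LΔ i j - L0 i j) * h j) ∧
    (∀ h : V → ℝ, (∀ v, 0 ≤ h v ∧ h v ≤ 1) →
      (∀ C : List V, IsPath (fun a b => Relation.TransGen A a b) s t C →
          LenW (fun i j => if j = t then L0 i t
            else L0 i j + (LΔ i j - L0 i j) * h j) C ≤ M) →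
      (∀ C : List V, IsPath (fun a b => Relation.TransGen A a b) s t C →
          LenW (fun i j => if j = t then L0 i t
            else LΔ i j - (Ldhat j - L0 s j) * (1 - h j)) C ≤ M)) :=
  dom_stronger_than_lay_general A s t L0 LΔ Ldhat hcond M
end

section
/- (Integrality for unitary AnchRob.) Let (J∪{s,t}, ≺) be a finite poset with least element s and greatest element t, and let M be a nonnegative integer. Then the polytope P of pairs (z, h) ∈ ℝ^{J∪{s,t}} × ℝ^J satisfying z_i − z_s ≥ 0 and z_t − z_i ≥ 0 for all i ∈ J, z_t ≤ M, z_j − z_i ≥ h_j for all i, j ∈ J with i ≺ j, z ≥ 0, and 0 ≤ h_j ≤ 1 for all j ∈ J, has only integer extreme points. -/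
/-!
Take a point `x` of a polyhedron cut out by constraints `c ≤ x a - x b` with `c ∈ ℤ`, where either
side may also be the constant `0`. If some coordinate of `x` is not an integer, with fractional
part `θ`, shift every coordinate whose fractional part is `θ` by `±ε`. A constraint whose two sides
move together is unaffected; otherwise `x a - x b` is not an integer and the constraint has slack,
so for small `ε` both shifted points stay in the polyhedron and `x` is their midpoint: `x` is not
extreme. In the coordinates `(z, z - h)` (the paper's `z' = 1 + z - h`, shifted by `1`) every
constraint of the unitary Anchor-Robust polytope has this form.
-/

open Set Filter Topology

theorem eq_zero_of_mem_extremePoints_of_add_mem_of_sub_mem {𝕜 E : Type*} [Field 𝕜] [LinearOrder 𝕜]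
    [IsStrictOrderedRing 𝕜] [AddCommGroup E] [Module 𝕜 E] {A : Set E} {x v : E}
    (hx : x ∈ A.extremePoints 𝕜) (hadd : x + v ∈ A) (hsub : x - v ∈ A) : v = 0 := by
  have hmid : x ∈ openSegment 𝕜 (x + v) (x - v) :=
    ⟨1 / 2, 1 / 2, by norm_num, by norm_num, by norm_num, by module⟩
  simpa using hx.2 hadd hsub hmid

theorem intCast_le_add_of_abs_lt_fract {R : Type*} [CommRing R] [LinearOrder R]
    [IsStrictOrderedRing R] [FloorRing R] {c : ℤ} {y e : R} (hc : (c : R) ≤ y)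
    (he : |e| < Int.fract y) : (c : R) ≤ y + e := by
  have hfloor : (c : R) ≤ ⌊y⌋ := by exact_mod_cast Int.le_floor.2 hc
  have := Int.floor_add_fract y
  linarith [neg_abs_le e]

section DifferenceConstraints

variable {ι κ : Type*}

noncomputable def fractIndicator (θ : ℝ) (y : κ → ℝ) (u : κ) : ℝ :=
  if Int.fract (y u) = θ then 1 else 0

theorem abs_fractIndicator_sub_le_one (θ : ℝ) (y : κ → ℝ) (u w : κ) :
    |fractIndicator θ y u - fractIndicator θ y w| ≤ 1 := by
  unfold fractIndicator; split_ifs <;> norm_num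

theorem fractIndicator_eq_of_fract_sub_eq_zero {θ : ℝ} {y : κ → ℝ} {u w : κ}
    (h : Int.fract (y u - y w) = 0) : fractIndicator θ y u = fractIndicator θ y w := by
  obtain ⟨n, hn⟩ := Int.fract_eq_zero_iff.1 h
  have : Int.fract (y u) = Int.fract (y w) := Int.fract_eq_fract.2 ⟨n, hn.symm⟩
  simp only [fractIndicator, this]

/-- `none` is a coordinate fixed at `0`, so that integral bounds on single coordinates are
difference constraints too. -/
def extendZero (x : ι → ℝ) (o : Option ι) : ℝ := o.elim 0 x

def differencePolyhedron (C : Set (Option ι × Option ι × ℤ)) : Set (ι → ℝ) :=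
  {x | ∀ p ∈ C, (p.2.2 : ℝ) ≤ extendZero x p.1 - extendZero x p.2.1}

theorem extendZero_add_smul_fractIndicator {θ : ℝ} (hθ : θ ≠ 0) (x : ι → ℝ) (ε : ℝ)
    (o : Option ι) : extendZero (x + ε • fractIndicator θ x) o =
      extendZero x o + ε * fractIndicator θ (extendZero x) o := by
  cases o with
  | none => simp [extendZero, fractIndicator, Ne.symm hθ]
  | some i => rfl

theorem eventually_intCast_le_add_smul_fractIndicator [Finite κ] (θ : ℝ) (y : κ → ℝ) :
    ∀ᶠ ε in 𝓝 (0 : ℝ), ∀ u w (c : ℤ), (c : ℝ) ≤ y u - y w →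
      (c : ℝ) ≤ y u - y w + ε * (fractIndicator θ y u - fractIndicator θ y w) := by
  refine eventually_all.2 fun u => eventually_all.2 fun w => ?_
  by_cases hδ : fractIndicator θ y u = fractIndicator θ y w
  · simp [hδ]
  -- `y u - y w` is not an integer, so its integral lower bounds have slack `Int.fract (y u - y w)`.
  have hfract : 0 < Int.fract (y u - y w) :=
    (Int.fract_nonneg _).lt_of_ne' (mt fractIndicator_eq_of_fract_sub_eq_zero hδ)
  filter_upwards [Metric.ball_mem_nhds 0 hfract] with ε hε c hc
  refine intCast_le_add_of_abs_lt_fract hc ?_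
  rw [Metric.mem_ball, Real.dist_0_eq_abs] at hε
  calc |ε * (fractIndicator θ y u - fractIndicator θ y w)|
      ≤ |ε| := by
        rw [abs_mul]
        exact mul_le_of_le_one_right (abs_nonneg ε) (abs_fractIndicator_sub_le_one θ y u w)
    _ < _ := hε

variable [Finite ι] {C : Set (Option ι × Option ι × ℤ)} {x : ι → ℝ}

theorem exists_pos_add_smul_fractIndicator_mem_differencePolyhedron {θ : ℝ} (hθ : θ ≠ 0)
    (hx : x ∈ differencePolyhedron C) :
    ∃ r : ℝ, 0 < r ∧ ∀ ε : ℝ, |ε| < r → x + ε • fractIndicator θ x ∈ differencePolyhedron C := by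
  obtain ⟨r, hr, hsmall⟩ := Metric.eventually_nhds_iff.1
    (eventually_intCast_le_add_smul_fractIndicator θ (extendZero x))
  refine ⟨r, hr, fun ε hε p hp => ?_⟩
  rw [extendZero_add_smul_fractIndicator hθ, extendZero_add_smul_fractIndicator hθ]
  have := hsmall (by rwa [Real.dist_0_eq_abs]) p.1 p.2.1 p.2.2 (hx p hp)
  linarith

theorem exists_intCast_eq_of_mem_extremePoints_differencePolyhedron
    (hx : x ∈ (differencePolyhedron C).extremePoints ℝ) (i : ι) : ∃ n : ℤ, x i = n := by
  by_contra hi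
  set θ := Int.fract (x i)
  have hθ : θ ≠ 0 := fun h => hi (by simpa [eq_comm] using Int.fract_eq_zero_iff.1 h)
  obtain ⟨r, hr, hmem⟩ := exists_pos_add_smul_fractIndicator_mem_differencePolyhedron hθ hx.1
  have hzero := eq_zero_of_mem_extremePoints_of_add_mem_of_sub_mem hx
    (hmem (r / 2) (by rw [abs_of_pos (by positivity)]; linarith))
    (by simpa [sub_eq_add_neg, neg_smul] using
      hmem (-(r / 2)) (by rw [abs_neg, abs_of_pos (by positivity)]; linarith))
  have hδ : fractIndicator θ x i = 1 := if_pos rfl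
  rw [smul_eq_zero, or_iff_right (by positivity)] at hzero
  simp [hzero] at hδ

end DifferenceConstraints

section UnitaryAnchorRobust

variable {V : Type*}

def auxCoordEquiv : ((V → ℝ) × (V → ℝ)) ≃ₗ[ℝ] (V ⊕ V → ℝ) where
  toFun zh := Sum.elim zh.1 (zh.1 - zh.2)
  invFun y := (y ∘ Sum.inl, y ∘ Sum.inl - y ∘ Sum.inr)
  map_add' _ _ := by ext (_ | _) <;> simp [add_sub_add_comm]
  map_smul' _ _ := by ext (_ | _) <;> simp [mul_sub]
  left_inv zh := by ext v <;> simp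
  right_inv y := by ext (v | v) <;> simp

@[simp]
theorem auxCoordEquiv_apply_inl (zh : (V → ℝ) × (V → ℝ)) (v : V) :
    auxCoordEquiv zh (.inl v) = zh.1 v :=
  rfl

@[simp]
theorem auxCoordEquiv_apply_inr (zh : (V → ℝ) × (V → ℝ)) (v : V) :
    auxCoordEquiv zh (.inr v) = zh.1 v - zh.2 v :=
  rfl

variable [PartialOrder V]

def unitaryAnchorPolytope (s t : V) (M : ℕ) : Set ((V → ℝ) × (V → ℝ)) :=
  {zh | (∀ i, i ≠ s → i ≠ t → zh.1 s ≤ zh.1 i ∧ zh.1 i ≤ zh.1 t) ∧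
        zh.1 t ≤ (M : ℝ) ∧
        (∀ i j, i ≠ s → i ≠ t → j ≠ s → j ≠ t → i < j → zh.2 j ≤ zh.1 j - zh.1 i) ∧
        (∀ v, 0 ≤ zh.1 v) ∧
        (∀ j, 0 ≤ zh.2 j ∧ zh.2 j ≤ 1) ∧ zh.2 s = 0 ∧ zh.2 t = 0}

def unitaryAnchorConstraints (s t : V) (M : ℕ) : Set (Option (V ⊕ V) × Option (V ⊕ V) × ℤ) :=
  (fun i => (some (.inl i), some (.inl s), 0)) '' {s, t}ᶜ ∪
  (fun i => (some (.inl t), some (.inl i), 0)) '' {s, t}ᶜ ∪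
  {(none, some (.inl t), -(M : ℤ))} ∪
  (fun ij : V × V => (some (.inr ij.2), some (.inl ij.1), 0)) ''
    {ij | ij.1 ∉ ({s, t} : Set V) ∧ ij.2 ∉ ({s, t} : Set V) ∧ ij.1 < ij.2} ∪
  range (fun v => (some (.inl v), none, 0)) ∪
  range (fun v => (some (.inl v), some (.inr v), 0)) ∪
  range (fun v => (some (.inr v), some (.inl v), -1)) ∪
  {(some (.inr s), some (.inl s), 0), (some (.inr t), some (.inl t), 0)}

theorem unitaryAnchorPolytope_eq_preimage (s t : V) (M : ℕ) :
    unitaryAnchorPolytope s t M =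
      auxCoordEquiv ⁻¹' differencePolyhedron (unitaryAnchorConstraints s t M) := by
  ext ⟨z, h⟩
  simp only [unitaryAnchorConstraints, differencePolyhedron, mem_preimage, mem_ofPred_eq,
    mem_union, or_imp, forall_and, forall_mem_image, forall_mem_range, forall_mem_insert,
    mem_singleton_iff, forall_eq]
  simp only [unitaryAnchorPolytope, extendZero, mem_ofPred_eq, mem_compl_iff, mem_insert_iff,
    mem_singleton_iff, not_or, ne_eq, and_imp, Prod.forall, Option.elim_some, Option.elim_none,
    auxCoordEquiv_apply_inl, auxCoordEquiv_apply_inr, Int.cast_zero, Int.cast_neg, Int.cast_natCast,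
    Int.cast_one, Int.reduceNeg, sub_nonneg, sub_zero, zero_sub, neg_le_neg_iff, sub_sub_cancel,
    sub_sub_cancel_left, Left.nonneg_neg_iff]
  constructor
  · rintro ⟨hJ, hM, hprec, hz, hh, hs, ht⟩
    refine ⟨⟨⟨⟨⟨⟨⟨fun i his hit => (hJ i his hit).1, fun i his hit => (hJ i his hit).2⟩, hM⟩,
      fun i j his hit hjs hjt hij => ?_⟩, hz⟩, fun j => (hh j).1⟩, fun j => (hh j).2⟩, hs.le, ht.le⟩
    linarith [hprec i j his hit hjs hjt hij]
  · rintro ⟨⟨⟨⟨⟨⟨⟨hJs, hJt⟩, hM⟩, hprec⟩, hz⟩, hh0⟩, hh1⟩, hs, ht⟩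
    refine ⟨fun i his hit => ⟨hJs his hit, hJt his hit⟩, hM,
      fun i j his hit hjs hjt hij => ?_, hz, fun j => ⟨hh0 j, hh1 j⟩, hs.antisymm (hh0 s),
      ht.antisymm (hh0 t)⟩
    linarith [hprec i j his hit hjs hjt hij]

end UnitaryAnchorRobust

theorem unitary_anchrob_polytope_integral_general
    {V : Type*} [Fintype V] [PartialOrder V] (s t : V)
    (M : ℕ)
    (P : Set ((V → ℝ) × (V → ℝ)))
    (hP : P = {zh | (∀ i, i ≠ s → i ≠ t → zh.1 s ≤ zh.1 i ∧ zh.1 i ≤ zh.1 t) ∧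
        zh.1 t ≤ (M : ℝ) ∧
        (∀ i j, i ≠ s → i ≠ t → j ≠ s → j ≠ t → i < j → zh.2 j ≤ zh.1 j - zh.1 i) ∧
        (∀ v, 0 ≤ zh.1 v) ∧
        (∀ j, 0 ≤ zh.2 j ∧ zh.2 j ≤ 1) ∧ zh.2 s = 0 ∧ zh.2 t = 0}) :
    ∀ zh ∈ Set.extremePoints ℝ P,
      (∀ v, ∃ n : ℤ, zh.1 v = (n : ℝ)) ∧ (∀ v, ∃ n : ℤ, zh.2 v = (n : ℝ)) := by
  change P = unitaryAnchorPolytope s t M at hP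
  intro zh hzh
  have hext : auxCoordEquiv zh ∈
      (differencePolyhedron (unitaryAnchorConstraints s t M)).extremePoints ℝ := by
    rw [← image_preimage_eq (differencePolyhedron _) auxCoordEquiv.surjective,
      ← unitaryAnchorPolytope_eq_preimage, ← hP, ← image_extremePoints]
    exact mem_image_of_mem _ hzh
  have hint := exists_intCast_eq_of_mem_extremePoints_differencePolyhedron hext
  refine ⟨fun v => hint (.inl v), fun v => ?_⟩
  obtain ⟨m, hm⟩ := hint (.inl v)
  obtain ⟨n, hn⟩ := hint (.inr v)
  refine ⟨m - n, ?_⟩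
  rw [auxCoordEquiv_apply_inl] at hm
  rw [auxCoordEquiv_apply_inr] at hn
  push_cast
  linarith

/-- integrality for the unitary Anchor-Robust problem: the polytope of
pairs `(z,h)` satisfying `z_i ≥ z_s`, `z_t ≥ z_i` (i ∈ J), `z_t ≤ M`,
`z_j − z_i ≥ h_j` for `i ≺ j` in `J`, `z ≥ 0` and `0 ≤ h ≤ 1`, over a finite poset
with least element `s`, greatest element `t` and integer deadline `M`, has only
integer extreme points. -/
theorem unitary_anchrob_polytope_integral
    {V : Type*} [Fintype V] [PartialOrder V] (s t : V)
    (hs : ∀ v, s ≤ v) (ht : ∀ v, v ≤ t) (M : ℕ)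
    (P : Set ((V → ℝ) × (V → ℝ)))
    (hP : P = {zh | (∀ i, i ≠ s → i ≠ t → zh.1 s ≤ zh.1 i ∧ zh.1 i ≤ zh.1 t) ∧
        zh.1 t ≤ (M : ℝ) ∧
        (∀ i j, i ≠ s → i ≠ t → j ≠ s → j ≠ t → i < j → zh.2 j ≤ zh.1 j - zh.1 i) ∧
        (∀ v, 0 ≤ zh.1 v) ∧
        (∀ j, 0 ≤ zh.2 j ∧ zh.2 j ≤ 1) ∧ zh.2 s = 0 ∧ zh.2 t = 0}) :
    ∀ zh ∈ Set.extremePoints ℝ P,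
      (∀ v, ∃ n : ℤ, zh.1 v = (n : ℝ)) ∧ (∀ v, ∃ n : ℤ, zh.2 v = (n : ℝ)) :=
  unitary_anchrob_polytope_integral_general s t M P hP
end
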